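/- arXiv:2402.12961 — 3 statements merged into one kernel-verified Lean document; each statement's English description precedes it below -/
import Mathlib

section
/- Let T ∈ B_{A^{1/2}}(H) and suppose the range of A is closed. Then sup{|λ| : λ ∈ σ_A(T)} = r_A(T). -/
variable {H : Type*} [NormedAddCommGroup H] [InnerProductSpace ℂ H] [CompleteSpace H]

/-- The semi-norm `‖x‖_A = ⟨Ax, x⟩^{1/2}` induced by a positive operator `A`. -/
noncomputable def anorm (A : H →L[ℂ] H) (x : H) : ℝ :=
  Real.sqrt (RCLike.re (inner ℂ (A x) x : ℂ))

/-- Membership in `B_{A^{1/2}}(H)`: there is `c > 0` with `‖Tx‖_A ≤ c ‖x‖_A` for all `x`. -/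
def MemBA (A T : H →L[ℂ] H) : Prop :=
  ∃ c > 0, ∀ x : H, anorm A (T x) ≤ c * anorm A x

/-- The `A`-operator seminorm `‖T‖_A`: the least `c ≥ 0` with `‖Tx‖_A ≤ c ‖x‖_A` for all `x`. -/
noncomputable def opANorm (A T : H →L[ℂ] H) : ℝ :=
  sInf {c : ℝ | 0 ≤ c ∧ ∀ x : H, anorm A (T x) ≤ c * anorm A x}

/-- `T` is `A`-invertible in `B_{A^{1/2}}(H)`. -/
def AInv (A T : H →L[ℂ] H) : Prop :=
  T ≠ 0 ∧ ∃ S : H →L[ℂ] H, S ≠ 0 ∧ MemBA A S ∧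
    A.comp (T.comp S) = A ∧ A.comp (S.comp T) = A

/-- The `A`-resolvent set `ρ_A(T)`. -/
def rhoA (A T : H →L[ℂ] H) : Set ℂ :=
  {lam : ℂ | AInv A (lam • (1 : H →L[ℂ] H) - T)}

/-- The `A`-spectrum `σ_A(T)`. -/
def sigmaA (A T : H →L[ℂ] H) : Set ℂ := (rhoA A T)ᶜ

/-- The `A`-spectral radius `r_A(T) = inf_{n ≥ 1} ‖T^n‖_A^{1/n}`. -/
noncomputable def rA (A T : H →L[ℂ] H) : ℝ :=
  ⨅ n : ℕ+, (opANorm A (T ^ (n : ℕ))) ^ ((((n : ℕ) : ℝ))⁻¹)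

/-- `sup {|λ| : λ ∈ σ_A(T)}`. -/
noncomputable def supSpecA (A T : H →L[ℂ] H) : ℝ :=
  sSup ((fun z : ℂ => ‖z‖) '' sigmaA A T)

/-- `S` is the `A^{1/2}`-adjoint `T^⋄` of `T`. -/
def IsDiamond (sqrtA T S : H →L[ℂ] H) : Prop :=
  sqrtA.comp S = (ContinuousLinearMap.adjoint T).comp sqrtA ∧
    Set.range (⇑S) ⊆ closure (Set.range (⇑sqrtA))

/-- The orthogonal projection of `H` onto the closure of the range of `A`. -/
noncomputable def projA (A : H →L[ℂ] H) : H →L[ℂ] H :=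
  haveI : CompleteSpace ((LinearMap.range (A : H →ₗ[ℂ] H)).topologicalClosure : Submodule ℂ H) :=
    (Submodule.isClosed_topologicalClosure _).completeSpace_coe
  ((LinearMap.range (A : H →ₗ[ℂ] H)).topologicalClosure.subtypeL).comp
    (Submodule.orthogonalProjectionOnto (LinearMap.range (A : H →ₗ[ℂ] H)).topologicalClosure)

/-!
With closed range, `‖x‖_A = ‖A^{1/2} x‖` is equivalent to the norm of the orthogonal projection
`P x` onto `K = (ker A)ᗮ`, and every `T ∈ B_{A^{1/2}}(H)` leaves `ker A` invariant. So `T` acts,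
modulo `ker A`, through its compression `T̃ = P T|_K`, a bounded operator on the Hilbert space `K`.
Then `λ - T` is `A`-invertible iff `λ - T̃` is invertible, i.e. `σ_A(T) = σ(T̃)`, and
`‖T^n‖_A` and `‖T̃^n‖` agree up to a factor independent of `n`. By Gelfand's formula
`‖T^n‖_A^{1/n} → r(T̃)`; by submultiplicativity this limit is also the infimum `r_A(T)`.
The theorem is then the classical `max {|λ| : λ ∈ σ(T̃)} = r(T̃)`.
-/

open ContinuousLinearMap Filter Topology NNReal

section RootAsymptotics

lemma tendsto_const_rpow_inv_natCast {C : ℝ} (hC : 0 < C) :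
    Tendsto (fun n : ℕ ↦ C ^ (n : ℝ)⁻¹) atTop (𝓝 1) := by
  simpa [Function.comp_def] using (Real.continuousAt_const_rpow (b := 0) hC.ne').tendsto.comp
    (tendsto_inv_atTop_zero.comp tendsto_natCast_atTop_atTop)

lemma Filter.Tendsto.rpow_inv_of_le_mul {a b : ℕ → ℝ} {C r : ℝ} (hC : 0 ≤ C)
    (ha : ∀ n, 0 ≤ a n) (hb : ∀ n, 0 ≤ b n)
    (hab : ∀ n, a n ≤ C * b n) (hba : ∀ n, b n ≤ C * a n)
    (h : Tendsto (fun n : ℕ ↦ b n ^ (n : ℝ)⁻¹) atTop (𝓝 r)) :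
    Tendsto (fun n : ℕ ↦ a n ^ (n : ℝ)⁻¹) atTop (𝓝 r) := by
  have hC1 : 0 < C + 1 := by linarith
  have hroot := tendsto_const_rpow_inv_natCast hC1
  have root_le : ∀ {u v : ℕ → ℝ}, (∀ n, 0 ≤ u n) → (∀ n, 0 ≤ v n) → (∀ n, u n ≤ C * v n) →
      ∀ n : ℕ, u n ^ (n : ℝ)⁻¹ ≤ (C + 1) ^ (n : ℝ)⁻¹ * v n ^ (n : ℝ)⁻¹ := by
    intro u v hu hv huv n
    rw [← Real.mul_rpow hC1.le (hv n)]
    gcongr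
    · exact hu n
    · nlinarith [huv n, hv n]
  refine tendsto_of_tendsto_of_tendsto_of_le_of_le
    (g := fun n ↦ b n ^ (n : ℝ)⁻¹ / (C + 1) ^ (n : ℝ)⁻¹)
    (h := fun n ↦ (C + 1) ^ (n : ℝ)⁻¹ * b n ^ (n : ℝ)⁻¹) ?_ ?_ (fun n ↦ ?_) (root_le ha hb hab)
  · simpa [Pi.div_def] using h.div hroot one_ne_zero
  · simpa using hroot.mul h
  · rw [div_le_iff₀' (by positivity)]
    exact root_le hb ha hba n

lemma iInf_rpow_inv_eq_of_tendsto {a : ℕ → ℝ} {r : ℝ} (ha : ∀ n, 0 ≤ a n)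
    (hmul : ∀ n k, a (n * k) ≤ a n ^ k) (h : Tendsto (fun n : ℕ ↦ a n ^ (n : ℝ)⁻¹) atTop (𝓝 r)) :
    ⨅ n : ℕ+, a n ^ ((n : ℕ) : ℝ)⁻¹ = r := by
  have hbdd : BddBelow (Set.range fun n : ℕ+ ↦ a n ^ ((n : ℕ) : ℝ)⁻¹) :=
    ⟨0, Set.forall_mem_range.2 fun n ↦ Real.rpow_nonneg (ha n) _⟩
  refine le_antisymm (ge_of_tendsto h ?_) (le_ciInf fun n ↦ ?_)
  · filter_upwards [eventually_ge_atTop 1] with n hn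
    exact ciInf_le hbdd ⟨n, hn⟩
  · refine le_of_tendsto (h.comp (tendsto_id.const_mul_atTop' n.pos)) ?_
    filter_upwards [eventually_ge_atTop 1] with k hk
    calc a (n * k) ^ ((n * k : ℕ) : ℝ)⁻¹ ≤ (a n ^ k) ^ ((n * k : ℕ) : ℝ)⁻¹ := by
          gcongr
          · exact ha _
          · exact hmul n k
      _ = a n ^ ((n : ℕ) : ℝ)⁻¹ := by
          rw [← Real.rpow_natCast, ← Real.rpow_mul (ha n)]
          congr 1
          push_cast
          field_simp

end RootAsymptotics

section SpectralRadius

variable {𝔸 : Type*} [NormedRing 𝔸] [NormedAlgebra ℂ 𝔸] [CompleteSpace 𝔸]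

lemma tendsto_norm_pow_rpow_inv_spectralRadius [NormOneClass 𝔸] (a : 𝔸) :
    Tendsto (fun n : ℕ ↦ ‖a ^ n‖ ^ (n : ℝ)⁻¹) atTop (𝓝 (spectralRadius ℂ a).toReal) := by
  have hfin : spectralRadius ℂ a ≠ ⊤ :=
    ne_top_of_le_ne_top ENNReal.coe_ne_top (spectrum.spectralRadius_le_nnnorm a)
  refine ((ENNReal.tendsto_toReal hfin).comp
    (spectrum.pow_norm_pow_one_div_tendsto_nhds_spectralRadius a)).congr fun n ↦ ?_
  simp [ENNReal.toReal_ofReal, Real.rpow_nonneg]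

lemma sSup_norm_image_spectrum [Nontrivial 𝔸] (a : 𝔸) :
    sSup ((‖·‖) '' spectrum ℂ a) = (spectralRadius ℂ a).toReal := by
  obtain ⟨z, hz, hzr⟩ := spectrum.exists_nnnorm_eq_spectralRadius a
  rw [← hzr]
  refine IsGreatest.csSup_eq ⟨⟨z, hz, rfl⟩, Set.forall_mem_image.2 fun w hw ↦ ?_⟩
  have : (‖w‖₊ : ENNReal) ≤ ‖z‖₊ := hzr ▸ le_iSup₂ (f := fun k (_ : k ∈ spectrum ℂ a) ↦
    (‖k‖₊ : ENNReal)) w hw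
  exact_mod_cast this

end SpectralRadius

section AOperatorSeminorm

variable {E : Type*} [NormedAddCommGroup E] [InnerProductSpace ℂ E] {A S U : E →L[ℂ] E}

lemma anorm_nonneg (A : E →L[ℂ] E) (x : E) : 0 ≤ anorm A x := Real.sqrt_nonneg _

lemma MemBA.of_le {c : ℝ} (hc : 0 ≤ c) (h : ∀ x, anorm A (S x) ≤ c * anorm A x) : MemBA A S :=
  ⟨c + 1, by positivity, fun x ↦ (h x).trans (by gcongr; exacts [anorm_nonneg A x, by linarith])⟩

lemma opANorm_nonneg (A S : E →L[ℂ] E) : 0 ≤ opANorm A S :=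
  Real.sInf_nonneg fun _ hc ↦ hc.1

lemma opANorm_le {c : ℝ} (hc : 0 ≤ c) (h : ∀ x, anorm A (S x) ≤ c * anorm A x) :
    opANorm A S ≤ c :=
  csInf_le ⟨0, fun _ hb ↦ hb.1⟩ ⟨hc, h⟩

lemma MemBA.anorm_apply_le (hS : MemBA A S) (x : E) :
    anorm A (S x) ≤ opANorm A S * anorm A x := by
  obtain ⟨c, hc, hb⟩ := hS
  rcases (anorm_nonneg A x).eq_or_lt with h0 | hpos
  · simpa [← h0] using hb x
  · rw [← div_le_iff₀ hpos]
    exact le_csInf ⟨c, hc.le, hb⟩ fun b hb' ↦ (div_le_iff₀ hpos).2 (hb'.2 x)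

lemma MemBA.anorm_mul_apply_le (hS : MemBA A S) (hU : MemBA A U) (x : E) :
    anorm A ((S * U) x) ≤ opANorm A S * opANorm A U * anorm A x :=
  calc anorm A (S (U x)) ≤ opANorm A S * anorm A (U x) := hS.anorm_apply_le _
    _ ≤ opANorm A S * (opANorm A U * anorm A x) := by
        gcongr
        exacts [opANorm_nonneg A S, hU.anorm_apply_le x]
    _ = opANorm A S * opANorm A U * anorm A x := (mul_assoc _ _ _).symm

lemma MemBA.mul (hS : MemBA A S) (hU : MemBA A U) : MemBA A (S * U) :=
  .of_le (mul_nonneg (opANorm_nonneg A S) (opANorm_nonneg A U)) (hS.anorm_mul_apply_le hU)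

lemma opANorm_mul_le (hS : MemBA A S) (hU : MemBA A U) :
    opANorm A (S * U) ≤ opANorm A S * opANorm A U :=
  opANorm_le (mul_nonneg (opANorm_nonneg A S) (opANorm_nonneg A U)) (hS.anorm_mul_apply_le hU)

lemma memBA_one (A : E →L[ℂ] E) : MemBA A 1 :=
  .of_le zero_le_one fun x ↦ by simp

lemma opANorm_one_le (A : E →L[ℂ] E) : opANorm A 1 ≤ 1 :=
  opANorm_le zero_le_one fun x ↦ by simp

lemma MemBA.pow (hS : MemBA A S) (n : ℕ) : MemBA A (S ^ n) := by
  induction n with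
  | zero => exact memBA_one A
  | succ n ih => exact pow_succ S n ▸ ih.mul hS

lemma opANorm_pow_le (hS : MemBA A S) (n : ℕ) : opANorm A (S ^ n) ≤ opANorm A S ^ n := by
  induction n with
  | zero => exact opANorm_one_le A
  | succ n ih =>
    rw [pow_succ, pow_succ]
    exact (opANorm_mul_le (hS.pow n) hS).trans (by gcongr; exact opANorm_nonneg A S)

end AOperatorSeminorm

section SqrtA

variable {A S : H →L[ℂ] H}

lemma sqrt_apply_sqrt_apply (hA : A.IsPositive) (x : H) :
    CFC.sqrt A (CFC.sqrt A x) = A x := by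
  rw [← mul_apply_eq_comp, CFC.sqrt_mul_sqrt_self A ((nonneg_iff_isPositive A).2 hA)]

lemma anorm_eq_norm_sqrt (hA : A.IsPositive) (x : H) : anorm A x = ‖CFC.sqrt A x‖ := by
  have hR : IsSelfAdjoint (CFC.sqrt A) := (CFC.sqrt_nonneg A).isSelfAdjoint
  rw [anorm, ← sqrt_apply_sqrt_apply hA, ← hR.adjoint_eq, adjoint_inner_left, hR.adjoint_eq,
    inner_self_eq_norm_sq, Real.sqrt_sq (norm_nonneg _)]

lemma anorm_eq_zero_iff (hA : A.IsPositive) {x : H} : anorm A x = 0 ↔ A x = 0 := by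
  refine ⟨fun h ↦ ?_, fun h ↦ by simp [anorm, h]⟩
  rw [anorm_eq_norm_sqrt hA, norm_eq_zero] at h
  rw [← sqrt_apply_sqrt_apply hA, h, map_zero]

lemma anorm_congr (hA : A.IsPositive) {x y : H} (h : A x = A y) : anorm A x = anorm A y := by
  have : CFC.sqrt A x = CFC.sqrt A y := by
    rw [← sub_eq_zero, ← map_sub, ← norm_eq_zero, ← anorm_eq_norm_sqrt hA, anorm_eq_zero_iff hA,
      map_sub, h, sub_self]
  rw [anorm_eq_norm_sqrt hA, anorm_eq_norm_sqrt hA, this]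

lemma anorm_le_mul_norm (hA : A.IsPositive) (x : H) : anorm A x ≤ ‖CFC.sqrt A‖ * ‖x‖ :=
  anorm_eq_norm_sqrt hA x ▸ le_opNorm _ x

lemma norm_apply_le_mul_anorm (hA : A.IsPositive) (x : H) :
    ‖A x‖ ≤ ‖CFC.sqrt A‖ * anorm A x := by
  rw [anorm_eq_norm_sqrt hA, ← sqrt_apply_sqrt_apply hA]
  exact le_opNorm _ _

lemma MemBA.mapsTo_ker (hA : A.IsPositive) (hS : MemBA A S) : Set.MapsTo S A.ker A.ker := by
  intro w (hw : A w = 0)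
  have := hS.anorm_apply_le w
  rw [(anorm_eq_zero_iff hA).2 hw, mul_zero] at this
  exact (anorm_eq_zero_iff hA).1 (le_antisymm this (anorm_nonneg A _))

end SqrtA

section Compression

variable {A X Y : H →L[ℂ] H}

lemma orthogonalProjectionOnto_ker_orthogonal_eq_iff {F : Type*} [NormedAddCommGroup F]
    [NormedSpace ℂ F] (B : H →L[ℂ] F) {x y : H} :
    B.kerᗮ.orthogonalProjectionOnto x = B.kerᗮ.orthogonalProjectionOnto y ↔ B x = B y := by
  rw [← sub_eq_zero, ← map_sub, Submodule.orthogonalProjectionOnto_eq_zero_iff,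
    Submodule.orthogonal_orthogonal, LinearMap.mem_ker, map_sub, sub_eq_zero]
  exact Iff.rfl

/-- `P X|_K`, where `K = (ker A)ᗮ` is the closure of the range of `A` and `P` the orthogonal
projection onto it. -/
noncomputable def compression (A X : H →L[ℂ] H) : A.kerᗮ →L[ℂ] A.kerᗮ :=
  A.kerᗮ.orthogonalProjectionOnto ∘L X ∘L A.kerᗮ.subtypeL

noncomputable def extendByZero (A : H →L[ℂ] H) (R : A.kerᗮ →L[ℂ] A.kerᗮ) : H →L[ℂ] H :=
  A.kerᗮ.subtypeL ∘L R ∘L A.kerᗮ.orthogonalProjectionOnto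

lemma compression_apply (p : A.kerᗮ) :
    compression A X p = A.kerᗮ.orthogonalProjectionOnto (X p) := rfl

lemma orthogonalProjectionOnto_extendByZero (R : A.kerᗮ →L[ℂ] A.kerᗮ) (x : H) :
    A.kerᗮ.orthogonalProjectionOnto (extendByZero A R x) = R (A.kerᗮ.orthogonalProjectionOnto x) :=
  Submodule.orthogonalProjectionOnto_mem_subspace_eq_self _

lemma compression_extendByZero (R : A.kerᗮ →L[ℂ] A.kerᗮ) :
    compression A (extendByZero A R) = R := by
  ext p
  rw [compression_apply, orthogonalProjectionOnto_extendByZero,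
    Submodule.orthogonalProjectionOnto_mem_subspace_eq_self]

lemma mapsTo_ker_extendByZero (R : A.kerᗮ →L[ℂ] A.kerᗮ) :
    Set.MapsTo (extendByZero A R) A.ker A.ker := by
  intro w (hw : A w = 0)
  have : A.kerᗮ.orthogonalProjectionOnto w = A.kerᗮ.orthogonalProjectionOnto 0 :=
    (orthogonalProjectionOnto_ker_orthogonal_eq_iff A).2 (by rw [hw, map_zero])
  simp [extendByZero, this]

lemma orthogonalProjectionOnto_apply_of_mapsTo (hX : Set.MapsTo X A.ker A.ker) (x : H) :
    A.kerᗮ.orthogonalProjectionOnto (X x) =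
      compression A X (A.kerᗮ.orthogonalProjectionOnto x) := by
  rw [compression_apply, orthogonalProjectionOnto_ker_orthogonal_eq_iff, ← sub_eq_zero, ← map_sub,
    ← map_sub]
  refine hX (show A (x - _) = 0 from ?_)
  rw [map_sub, sub_eq_zero, ← orthogonalProjectionOnto_ker_orthogonal_eq_iff,
    Submodule.orthogonalProjectionOnto_mem_subspace_eq_self]

lemma compression_mul (hX : Set.MapsTo X A.ker A.ker) (Y : H →L[ℂ] H) :
    compression A (X * Y) = compression A X * compression A Y := by
  ext p
  exact congrArg Subtype.val (orthogonalProjectionOnto_apply_of_mapsTo hX (Y p))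

lemma compression_one : compression A 1 = 1 := by
  ext p
  exact congrArg Subtype.val (Submodule.orthogonalProjectionOnto_mem_subspace_eq_self p)

lemma compression_pow (hX : Set.MapsTo X A.ker A.ker) (n : ℕ) :
    compression A (X ^ n) = compression A X ^ n := by
  induction n with
  | zero => exact compression_one
  | succ n ih => rw [pow_succ', compression_mul hX, ih, pow_succ']

lemma compression_algebraMap_sub (z : ℂ) :
    compression A (algebraMap ℂ _ z - X) = algebraMap ℂ _ z - compression A X := by
  ext p
  simp [compression_apply, Algebra.algebraMap_eq_smul_one]

lemma compression_zero : compression A 0 = 0 := by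
  ext p
  simp [compression_apply]

lemma compression_eq_one_iff (hX : Set.MapsTo X A.ker A.ker) :
    compression A X = 1 ↔ A.comp X = A := by
  simp only [ContinuousLinearMap.ext_iff, comp_apply,
    ← orthogonalProjectionOnto_ker_orthogonal_eq_iff A]
  refine ⟨fun h x ↦ ?_, fun h p ↦ ?_⟩
  · rw [orthogonalProjectionOnto_apply_of_mapsTo hX, h, one_apply_eq_self]
  · rw [compression_apply, h, Submodule.orthogonalProjectionOnto_mem_subspace_eq_self,
      one_apply_eq_self]

end Compression

section ClosedRange

variable {F : Type*} [NormedAddCommGroup F] [NormedSpace ℂ F]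

lemma nontrivial_ker_orthogonal {B : H →L[ℂ] F} (hB : B ≠ 0) : Nontrivial B.kerᗮ := by
  obtain ⟨x, hx⟩ : ∃ x, B x ≠ 0 := by
    by_contra! h
    exact hB (ContinuousLinearMap.ext h)
  refine ⟨⟨B.kerᗮ.orthogonalProjectionOnto x, 0, fun h ↦ hx ?_⟩⟩
  rw [← map_zero B]
  exact (orthogonalProjectionOnto_ker_orthogonal_eq_iff B).1 (h.trans (map_zero _).symm)

lemma exists_norm_orthogonalProjectionOnto_le_of_isClosed_range [CompleteSpace F] {B : H →L[ℂ] F}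
    (hB : IsClosed (Set.range B)) :
    ∃ C : ℝ≥0, ∀ x, ‖B.kerᗮ.orthogonalProjectionOnto x‖ ≤ C * ‖B x‖ := by
  have : CompleteSpace (B : H →ₗ[ℂ] F).range := hB.completeSpace_coe
  obtain ⟨C, hC, hpre⟩ :=
    B.rangeRestrict.exists_preimage_norm_le (LinearMap.surjective_rangeRestrict (B : H →ₗ[ℂ] F))
  refine ⟨⟨C, hC.le⟩, fun x ↦ ?_⟩
  obtain ⟨y, hy, hyC⟩ := hpre (B.rangeRestrict x)
  have hxy : B.kerᗮ.orthogonalProjectionOnto x = B.kerᗮ.orthogonalProjectionOnto y :=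
    (orthogonalProjectionOnto_ker_orthogonal_eq_iff B).2 (congrArg Subtype.val hy).symm
  calc ‖B.kerᗮ.orthogonalProjectionOnto x‖ = ‖B.kerᗮ.orthogonalProjectionOnto y‖ := by rw [hxy]
    _ ≤ ‖y‖ := Submodule.norm_orthogonalProjectionOnto_apply_le _ _
    _ ≤ C * ‖B x‖ := hyC

end ClosedRange

section ASpectrum

variable {A T U X : H →L[ℂ] H}

lemma exists_norm_orthogonalProjectionOnto_le_mul_anorm (hA : A.IsPositive)
    (hclosed : IsClosed (Set.range A)) :
    ∃ c : ℝ≥0, ∀ x, ‖A.kerᗮ.orthogonalProjectionOnto x‖ ≤ c * anorm A x := by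
  obtain ⟨C, hC⟩ := exists_norm_orthogonalProjectionOnto_le_of_isClosed_range (B := A) hclosed
  refine ⟨C * ‖CFC.sqrt A‖₊, fun x ↦ (hC x).trans ?_⟩
  rw [NNReal.coe_mul, coe_nnnorm, mul_assoc]
  exact mul_le_mul_of_nonneg_left (norm_apply_le_mul_anorm hA x) C.2

lemma anorm_le_mul_norm_orthogonalProjectionOnto (hA : A.IsPositive) (x : H) :
    anorm A x ≤ ‖CFC.sqrt A‖ * ‖A.kerᗮ.orthogonalProjectionOnto x‖ := by
  have : A x = A (A.kerᗮ.orthogonalProjectionOnto x) :=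
    (orthogonalProjectionOnto_ker_orthogonal_eq_iff A).1
      (Submodule.orthogonalProjectionOnto_mem_subspace_eq_self _).symm
  rw [anorm_congr hA this]
  exact anorm_le_mul_norm hA _

lemma memBA_extendByZero {c : ℝ≥0} (hA : A.IsPositive)
    (hc : ∀ x, ‖A.kerᗮ.orthogonalProjectionOnto x‖ ≤ c * anorm A x) (R : A.kerᗮ →L[ℂ] A.kerᗮ) :
    MemBA A (extendByZero A R) :=
  .of_le (by positivity : 0 ≤ ‖CFC.sqrt A‖ * (‖R‖ * c)) fun x ↦
    calc anorm A (extendByZero A R x)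
        ≤ ‖CFC.sqrt A‖ * ‖A.kerᗮ.orthogonalProjectionOnto (extendByZero A R x)‖ :=
          anorm_le_mul_norm_orthogonalProjectionOnto hA _
      _ = ‖CFC.sqrt A‖ * ‖R (A.kerᗮ.orthogonalProjectionOnto x)‖ := by
          rw [orthogonalProjectionOnto_extendByZero]
      _ ≤ ‖CFC.sqrt A‖ * (‖R‖ * (c * anorm A x)) := by
          gcongr
          exact R.le_opNorm_of_le (hc x)
      _ = ‖CFC.sqrt A‖ * (‖R‖ * c) * anorm A x := by ring

lemma norm_compression_le {c : ℝ≥0} (hA : A.IsPositive)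
    (hc : ∀ x, ‖A.kerᗮ.orthogonalProjectionOnto x‖ ≤ c * anorm A x) (hX : MemBA A X) :
    ‖compression A X‖ ≤ c * ‖CFC.sqrt A‖ * opANorm A X :=
  opNorm_le_bound _ (by have := opANorm_nonneg A X; positivity) fun p ↦
    calc ‖compression A X p‖ ≤ c * anorm A (X p) := hc _
      _ ≤ c * (opANorm A X * (‖CFC.sqrt A‖ * ‖p‖)) := by
          gcongr
          refine (hX.anorm_apply_le p).trans ?_
          gcongr
          exacts [opANorm_nonneg A X, anorm_le_mul_norm hA p]
      _ = c * ‖CFC.sqrt A‖ * opANorm A X * ‖p‖ := by ring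

lemma opANorm_le_norm_compression {c : ℝ≥0} (hA : A.IsPositive)
    (hc : ∀ x, ‖A.kerᗮ.orthogonalProjectionOnto x‖ ≤ c * anorm A x) (hX : MemBA A X) :
    opANorm A X ≤ c * ‖CFC.sqrt A‖ * ‖compression A X‖ :=
  opANorm_le (by positivity) fun x ↦
    calc anorm A (X x) ≤ ‖CFC.sqrt A‖ * ‖A.kerᗮ.orthogonalProjectionOnto (X x)‖ :=
          anorm_le_mul_norm_orthogonalProjectionOnto hA _
      _ = ‖CFC.sqrt A‖ * ‖compression A X (A.kerᗮ.orthogonalProjectionOnto x)‖ := by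
          rw [orthogonalProjectionOnto_apply_of_mapsTo (hX.mapsTo_ker hA)]
      _ ≤ ‖CFC.sqrt A‖ * (‖compression A X‖ * (c * anorm A x)) := by
          gcongr
          exact le_opNorm_of_le _ (hc x)
      _ = c * ‖CFC.sqrt A‖ * ‖compression A X‖ * anorm A x := by ring

lemma aInv_iff_isUnit_compression [Nontrivial A.kerᗮ] {c : ℝ≥0} (hA : A.IsPositive)
    (hc : ∀ x, ‖A.kerᗮ.orthogonalProjectionOnto x‖ ≤ c * anorm A x)
    (hU : Set.MapsTo U A.ker A.ker) :
    AInv A U ↔ IsUnit (compression A U) := by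
  constructor
  · rintro ⟨-, S, -, hS, hUS, hSU⟩
    have hS' := hS.mapsTo_ker hA
    refine isUnit_iff_exists.2 ⟨compression A S, ?_, ?_⟩
    · rw [← compression_mul hU, compression_eq_one_iff (X := U * S) (hU.comp hS')]
      exact hUS
    · rw [← compression_mul hS', compression_eq_one_iff (X := S * U) (hS'.comp hU)]
      exact hSU
  · intro hunit
    obtain ⟨R, hUR, hRU⟩ := isUnit_iff_exists.1 hunit
    have hS' := mapsTo_ker_extendByZero (A := A) R
    refine ⟨?_, extendByZero A R, fun h ↦ ?_, memBA_extendByZero hA hc R, ?_, ?_⟩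
    · rintro rfl
      rw [compression_zero] at hunit
      exact not_isUnit_zero hunit
    · rw [← compression_extendByZero R, h, compression_zero, mul_zero] at hUR
      exact zero_ne_one hUR
    · refine (compression_eq_one_iff (X := U * extendByZero A R) (hU.comp hS')).1 ?_
      rw [compression_mul hU, compression_extendByZero, hUR]
    · refine (compression_eq_one_iff (X := extendByZero A R * U) (hS'.comp hU)).1 ?_
      rw [compression_mul hS', compression_extendByZero, hRU]

lemma sigmaA_eq_spectrum [Nontrivial A.kerᗮ] {c : ℝ≥0} (hA : A.IsPositive)
    (hc : ∀ x, ‖A.kerᗮ.orthogonalProjectionOnto x‖ ≤ c * anorm A x) (hT : MemBA A T) :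
    sigmaA A T = spectrum ℂ (compression A T) := by
  ext z
  have hzT : Set.MapsTo (algebraMap ℂ (H →L[ℂ] H) z - T) A.ker A.ker := fun w (hw : A w = 0) ↦ by
    have hTw : A (T w) = 0 := hT.mapsTo_ker hA hw
    show A _ = 0
    simp [Algebra.algebraMap_eq_smul_one, hw, hTw]
  rw [sigmaA, rhoA, Set.mem_compl_iff, Set.mem_ofPred_eq, spectrum.mem_iff, not_iff_not,
    ← Algebra.algebraMap_eq_smul_one, aInv_iff_isUnit_compression hA hc hzT,
    compression_algebraMap_sub]

lemma rA_eq_spectralRadius [Nontrivial A.kerᗮ] {c : ℝ≥0} (hA : A.IsPositive)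
    (hc : ∀ x, ‖A.kerᗮ.orthogonalProjectionOnto x‖ ≤ c * anorm A x) (hT : MemBA A T) :
    rA A T = (spectralRadius ℂ (compression A T)).toReal := by
  have hpow := compression_pow (hT.mapsTo_ker hA)
  have hg := tendsto_norm_pow_rpow_inv_spectralRadius (compression A T)
  have hlim := hg.rpow_inv_of_le_mul (a := fun n ↦ opANorm A (T ^ n))
      (C := c * ‖CFC.sqrt A‖) (by positivity) (fun n ↦ opANorm_nonneg A _)
      -- not `norm_nonneg`: its norm instance on `K →L[ℂ] K` is very slow to unify with this one
      (fun n ↦ opNorm_nonneg _) (fun n ↦ ?_) (fun n ↦ ?_)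
  · exact iInf_rpow_inv_eq_of_tendsto (fun n ↦ opANorm_nonneg A _)
      (fun n k ↦ by rw [pow_mul]; exact opANorm_pow_le (hT.pow n) k) hlim
  · rw [← hpow]
    exact opANorm_le_norm_compression hA hc (hT.pow n)
  · rw [← hpow]
    exact norm_compression_le hA hc (hT.pow n)

end ASpectrum

theorem stmt1 (A T : H →L[ℂ] H) (hA : A.IsPositive) (hA0 : A ≠ 0)
    (hT : MemBA A T) (hclosed : IsClosed (Set.range (⇑A))) :
    supSpecA A T = rA A T := by
  obtain ⟨c, hc⟩ := exists_norm_orthogonalProjectionOnto_le_mul_anorm hA hclosed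
  have := nontrivial_ker_orthogonal hA0
  rw [supSpecA, sigmaA_eq_spectrum hA hc hT, rA_eq_spectralRadius hA hc hT]
  exact sSup_norm_image_spectrum (compression A T)
end

section
/- Let T ∈ B_{A^{1/2}}(H) satisfy TA^{1/2} = A^{1/2}T, and let S ∈ B_{A^{1/2}}(H) be the A^{1/2}-adjoint T^⋄ of T. Then r_A(T) = r_A(S). -/
variable {H : Type*} [NormedAddCommGroup H] [InnerProductSpace ℂ H] [CompleteSpace H]

/-!
Since `‖x‖_A = ‖A^{1/2} x‖` and `A^{1/2}` intertwines `T^n` with `T^n` and `S^n` with `(T^n)*`,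
a constant `c` bounds `T^n` (resp. `S^n`) in `‖·‖_A` exactly when it bounds `T^n` (resp. `(T^n)*`)
on `M = closure (range A^{1/2})`. Both operators leave `M` invariant, and for an operator `B` with
`B* M ⊆ M` the estimate `‖B* y‖² = ⟨y, B B* y⟩ ≤ ‖y‖ ‖B (B* y)‖` passes a bound from `B` to `B*`
on `M`. Hence `‖T^n‖_A = ‖S^n‖_A` for every `n`, and the two spectral radii coincide.
-/

open ContinuousLinearMap

section Adjoint

variable {𝕜 E : Type*} [RCLike 𝕜] [NormedAddCommGroup E] [InnerProductSpace 𝕜 E] [CompleteSpace E]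

theorem norm_adjoint_apply_le_of_mapsTo {B : E →L[𝕜] E} {M : Set E} {c : ℝ} (hc : 0 ≤ c)
    (hM : Set.MapsTo (adjoint B) M M) (hB : ∀ y ∈ M, ‖B y‖ ≤ c * ‖y‖) {y : E} (hy : y ∈ M) :
    ‖adjoint B y‖ ≤ c * ‖y‖ := by
  set z := adjoint B y
  have hsq : ‖z‖ ^ 2 ≤ c * ‖y‖ * ‖z‖ :=
    calc ‖z‖ ^ 2 = RCLike.re (inner 𝕜 y (B z)) := by
          rw [← adjoint_inner_left, inner_self_eq_norm_sq]
      _ ≤ ‖y‖ * ‖B z‖ := (RCLike.re_le_norm _).trans (norm_inner_le_norm _ _)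
      _ ≤ ‖y‖ * (c * ‖z‖) := by gcongr; exact hB z (hM hy)
      _ = c * ‖y‖ * ‖z‖ := by ring
  rcases (norm_nonneg z).eq_or_lt with hz | hz
  · rw [← hz]; positivity
  · nlinarith

theorem norm_apply_adjoint_le_of_semiconjBy {R P Q B : E →L[𝕜] E} {c : ℝ} (hc : 0 ≤ c)
    (hP : SemiconjBy R P B) (hQ : SemiconjBy R Q (adjoint B))
    (hbound : ∀ x, ‖R (P x)‖ ≤ c * ‖R x‖) (x : E) : ‖R (Q x)‖ ≤ c * ‖R x‖ := by
  have hBR : ∀ x, B (R x) = R (P x) := fun x => (congrArg (· x) hP).symm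
  have hBadjR : ∀ x, adjoint B (R x) = R (Q x) := fun x => (congrArg (· x) hQ).symm
  set M := closure (Set.range R)
  have hBM : ∀ y ∈ M, ‖B y‖ ≤ c * ‖y‖ := by
    have hclosed : IsClosed {y : E | ‖B y‖ ≤ c * ‖y‖} := isClosed_le (by fun_prop) (by fun_prop)
    refine fun y hy => closure_minimal ?_ hclosed hy
    rintro _ ⟨x, rfl⟩
    simpa only [Set.mem_ofPred_eq, hBR] using hbound x
  have hMinv : Set.MapsTo (adjoint B) M M := by
    refine fun y hy => map_mem_closure (adjoint B).continuous hy ?_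
    rintro _ ⟨x, rfl⟩
    exact ⟨Q x, (hBadjR x).symm⟩
  rw [← hBadjR]
  exact norm_adjoint_apply_le_of_mapsTo hc hMinv hBM (subset_closure ⟨x, rfl⟩)

end Adjoint

theorem anorm_eq_norm_apply {A R : H →L[ℂ] H} (hR : IsSelfAdjoint R) (hRA : R.comp R = A)
    (x : H) : anorm A x = ‖R x‖ := by
  rw [anorm, ← hRA, comp_apply, ← hR.adjoint_eq, adjoint_inner_left, hR.adjoint_eq,
    inner_self_eq_norm_sq, Real.sqrt_sq (norm_nonneg _)]

theorem opANorm_eq_of_semiconjBy {A R P Q B : H →L[ℂ] H} (hR : IsSelfAdjoint R)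
    (hRA : R.comp R = A) (hP : SemiconjBy R P B) (hQ : SemiconjBy R Q (adjoint B)) :
    opANorm A P = opANorm A Q := by
  have hP' : SemiconjBy R P (adjoint (adjoint B)) := by rwa [adjoint_adjoint]
  simp only [opANorm, anorm_eq_norm_apply hR hRA]
  congr 1
  ext c
  exact and_congr_right fun hc =>
    ⟨norm_apply_adjoint_le_of_semiconjBy hc hP hQ, norm_apply_adjoint_le_of_semiconjBy hc hQ hP'⟩

theorem stmt9_general (A sqrtA T S : H →L[ℂ] H)
    (hsqrt : sqrtA.IsPositive) (hsq : sqrtA.comp sqrtA = A)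
    (hcomm : T.comp sqrtA = sqrtA.comp T)
    (hS : IsDiamond sqrtA T S) :
    rA A T = rA A S := by
  have hTpow (n : ℕ) : SemiconjBy sqrtA (T ^ n) (T ^ n) :=
    Commute.pow_right (Commute.symm hcomm) n
  have hSpow (n : ℕ) : SemiconjBy sqrtA (S ^ n) (adjoint (T ^ n)) := by
    rw [← star_eq_adjoint, star_pow]
    exact SemiconjBy.pow_right hS.1 n
  unfold rA
  exact iInf_congr fun n => by
    rw [opANorm_eq_of_semiconjBy hsqrt.isSelfAdjoint hsq (hTpow n) (hSpow n)]

theorem stmt9 (A sqrtA T S : H →L[ℂ] H) (hA : A.IsPositive) (hA0 : A ≠ 0)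
    (hsqrt : sqrtA.IsPositive) (hsq : sqrtA.comp sqrtA = A)
    (hT : MemBA A T) (hcomm : T.comp sqrtA = sqrtA.comp T)
    (hSmem : MemBA A S) (hS : IsDiamond sqrtA T S) :
    rA A T = rA A S :=
  stmt9_general A sqrtA T S hsqrt hsq hcomm hS
end

section
/- Let T ∈ B_{A^{1/2}}(H) and let S ∈ B_{A^{1/2}}(H) be the A^{1/2}-adjoint T^⋄ of T. If λ ∈ ℂ satisfies |λ| > ‖T‖_A and |λ| > ‖S‖_A, then λ ∈ ρ_A(S), i.e., λI − S is A-invertible in B_{A^{1/2}}(H). -/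
variable {H : Type*} [NormedAddCommGroup H] [InnerProductSpace ℂ H] [CompleteSpace H]

/-! The `A^{1/2}`-adjoint `S` of `T` is an honest bounded operator with `‖S‖ ≤ ‖T‖_A`. Indeed `S`
maps into `K = closure (range A^{1/2})`, so `S* = S* P_K`, and the adjoint of
`A^{1/2} S = T* A^{1/2}` gives `‖S* A^{1/2} x‖ = ‖T x‖_A ≤ ‖T‖_A ‖A^{1/2} x‖`, which extends to `K`
by density. Hence `|λ| > ‖S‖`, so `λ - S` is invertible in `B(H)`. Its inverse lies in
`B_{A^{1/2}}(H)` because `‖(λ - S) y‖_A ≥ (|λ| - ‖S‖_A) ‖y‖_A`, so it is an `A`-inverse. -/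

open ContinuousLinearMap

section Adjoint

variable {𝕜 E F : Type*} [RCLike 𝕜] [NormedAddCommGroup E] [InnerProductSpace 𝕜 E]
  [CompleteSpace E] [NormedAddCommGroup F] [InnerProductSpace 𝕜 F] [CompleteSpace F]

theorem ContinuousLinearMap.norm_le_of_norm_adjoint_apply_le {K : Submodule 𝕜 F}
    [K.HasOrthogonalProjection] {S : E →L[𝕜] F} (hS : ∀ x, S x ∈ K) {c : ℝ} (hc : 0 ≤ c)
    (h : ∀ y ∈ K, ‖adjoint S y‖ ≤ c * ‖y‖) : ‖S‖ ≤ c := by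
  have hPS : K.starProjection ∘L S = S := by
    ext x; exact K.starProjection_eq_self_iff.mpr (hS x)
  have hSP : adjoint S ∘L K.starProjection = adjoint S := by
    conv_rhs => rw [← hPS, adjoint_comp, (isSelfAdjoint_starProjection K).adjoint_eq]
  rw [← LinearIsometryEquiv.norm_map adjoint S]
  refine opNorm_le_bound _ hc fun y => ?_
  calc ‖adjoint S y‖ = ‖adjoint S (K.starProjection y)‖ := by rw [← comp_apply, hSP]
    _ ≤ c * ‖K.starProjection y‖ := h _ (K.starProjection_apply_mem y)
    _ ≤ c * ‖y‖ := mul_le_mul_of_nonneg_left (K.norm_starProjection_apply_le y) hc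

end Adjoint

theorem forall_mem_closure_range_norm_le {E F G : Type*} [SeminormedAddCommGroup E]
    [SeminormedAddCommGroup F] [SeminormedAddCommGroup G] {B : E → F} {f : F → G}
    (hf : Continuous f) {c : ℝ} (h : ∀ x, ‖f (B x)‖ ≤ c * ‖B x‖) :
    ∀ y ∈ closure (Set.range B), ‖f y‖ ≤ c * ‖y‖ := by
  refine closure_minimal ?_ (isClosed_le hf.norm (continuous_const.mul continuous_norm))
  rintro _ ⟨x, rfl⟩
  exact h x

section Banach

variable {𝕜 E F : Type*} [NontriviallyNormedField 𝕜] [NormedAddCommGroup E] [NormedSpace 𝕜 E]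
  [NormedAddCommGroup F] [NormedSpace 𝕜 F]

theorem ContinuousLinearMap.isUnit_smul_one_sub_of_norm_lt [CompleteSpace E] {S : E →L[𝕜] E}
    {lam : 𝕜} (h : ‖S‖ < ‖lam‖) : IsUnit (lam • (1 : E →L[𝕜] E) - S) := by
  have := spectrum.mem_resolventSet_of_norm_lt_mul
    ((mul_le_of_le_one_right (norm_nonneg S) ContinuousLinearMap.norm_id_le).trans_lt h)
  rwa [spectrum.mem_resolventSet_iff, Algebra.algebraMap_eq_smul_one] at this

theorem ContinuousLinearMap.sub_mul_norm_le_norm_apply_smul_one_sub (B : E →L[𝕜] F)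
    {S : E →L[𝕜] E} {c : ℝ} (hS : ∀ x, ‖B (S x)‖ ≤ c * ‖B x‖) (lam : 𝕜) (x : E) :
    (‖lam‖ - c) * ‖B x‖ ≤ ‖B ((lam • (1 : E →L[𝕜] E) - S) x)‖ :=
  calc (‖lam‖ - c) * ‖B x‖ = ‖lam • B x‖ - c * ‖B x‖ := by rw [norm_smul]; ring
    _ ≤ ‖lam • B x‖ - ‖B (S x)‖ := by linarith [hS x]
    _ ≤ ‖lam • B x - B (S x)‖ := norm_sub_norm_le _ _
    _ = ‖B ((lam • (1 : E →L[𝕜] E) - S) x)‖ := by simp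

end Banach

section Seminorm

variable {E : Type*} [NormedAddCommGroup E] [InnerProductSpace ℂ E]

theorem MemBA.exists_bound_lt {A T : E →L[ℂ] E} (hT : MemBA A T) {r : ℝ}
    (h : opANorm A T < r) : ∃ c, 0 ≤ c ∧ c < r ∧ ∀ x, anorm A (T x) ≤ c * anorm A x := by
  obtain ⟨c, hc, hTc⟩ := hT
  obtain ⟨d, ⟨hd, hTd⟩, hdr⟩ :=
    exists_lt_of_csInf_lt (s := {c | 0 ≤ c ∧ ∀ x, anorm A (T x) ≤ c * anorm A x})
      ⟨c, hc.le, hTc⟩ h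
  exact ⟨d, hd, hdr, hTd⟩

theorem MemBA.of_mul_eq_one {A U V : E →L[ℂ] E} (hUV : U * V = 1) {δ : ℝ} (hδ : 0 < δ)
    (hU : ∀ x, δ * anorm A x ≤ anorm A (U x)) : MemBA A V := by
  refine ⟨δ⁻¹, inv_pos.mpr hδ, fun x => ?_⟩
  have := hU (V x)
  rw [← mul_apply_eq_comp, hUV, one_apply_eq_self] at this
  rwa [le_inv_mul_iff₀ hδ]

theorem AInv.of_mul_eq_one {A U V : E →L[ℂ] E} (hA : A ≠ 0) (hUV : U * V = 1) (hVU : V * U = 1)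
    (hV : MemBA A V) : AInv A U := by
  have hUV' : A * (U * V) = A := by rw [hUV, mul_one]
  have hVU' : A * (V * U) = A := by rw [hVU, mul_one]
  refine ⟨?_, V, ?_, hV, hUV', hVU'⟩
  · rintro rfl; exact hA (by simpa using hUV'.symm)
  · rintro rfl; exact hA (by simpa using hUV'.symm)

end Seminorm

theorem anorm_eq_norm {A B : H →L[ℂ] H} (hB : IsSelfAdjoint B) (hBA : B ∘L B = A) (x : H) :
    anorm A x = ‖B x‖ := by
  rw [anorm, ← hBA, comp_apply, ← hB.adjoint_eq, adjoint_inner_left, hB.adjoint_eq,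
    inner_self_eq_norm_sq, Real.sqrt_sq (norm_nonneg _)]

theorem IsDiamond.norm_le {B T S : H →L[ℂ] H} (hB : IsSelfAdjoint B) (hS : IsDiamond B T S)
    {c : ℝ} (hc : 0 ≤ c) (hT : ∀ x, ‖B (T x)‖ ≤ c * ‖B x‖) : ‖S‖ ≤ c := by
  let K := (LinearMap.range (B : H →ₗ[ℂ] H)).topologicalClosure
  have hK : (K : Set H) = closure (Set.range B) := by
    simp only [K, Submodule.topologicalClosure_coe, LinearMap.coe_range, coe_coe]
  have hSB : adjoint S ∘L B = B ∘L T := by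
    simpa only [adjoint_comp, adjoint_adjoint, hB.adjoint_eq] using congrArg adjoint hS.1
  have hTK : ∀ y ∈ closure (Set.range B), ‖adjoint S y‖ ≤ c * ‖y‖ :=
    forall_mem_closure_range_norm_le (adjoint S).continuous fun x => by
      simpa only [← comp_apply, hSB] using hT x
  refine norm_le_of_norm_adjoint_apply_le (K := K) (fun x => ?_) hc fun y hy => hTK y ?_
  · rw [← SetLike.mem_coe, hK]; exact hS.2 ⟨x, rfl⟩
  · rwa [← SetLike.mem_coe, hK] at hy

theorem stmt10_general (A sqrtA T S : H →L[ℂ] H) (hA0 : A ≠ 0)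
    (hsqrt : sqrtA.IsPositive) (hsq : sqrtA.comp sqrtA = A)
    (hT : MemBA A T) (hSmem : MemBA A S) (hS : IsDiamond sqrtA T S)
    (lam : ℂ) (hlamT : opANorm A T < ‖lam‖) (hlamS : opANorm A S < ‖lam‖) :
    lam ∈ rhoA A S := by
  have hB : IsSelfAdjoint sqrtA := hsqrt.isSelfAdjoint
  have hnorm := anorm_eq_norm hB hsq
  obtain ⟨cT, hcT0, hcT, hTc⟩ := hT.exists_bound_lt hlamT
  obtain ⟨cS, -, hcS, hSc⟩ := hSmem.exists_bound_lt hlamS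
  have hSnorm : ‖S‖ ≤ cT := hS.norm_le hB hcT0 fun x => by simpa only [hnorm] using hTc x
  obtain ⟨u, hu⟩ := isUnit_smul_one_sub_of_norm_lt (hSnorm.trans_lt hcT)
  have hbelow : ∀ x, (‖lam‖ - cS) * anorm A x ≤ anorm A ((lam • 1 - S) x) := fun x => by
    simpa only [hnorm] using sqrtA.sub_mul_norm_le_norm_apply_smul_one_sub
      (fun y => by simpa only [hnorm] using hSc y) lam x
  rw [← hu] at hbelow
  exact AInv.of_mul_eq_one hA0 (hu ▸ u.mul_inv) (hu ▸ u.inv_mul)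
    (MemBA.of_mul_eq_one u.mul_inv (sub_pos.2 hcS) hbelow)

theorem stmt10 (A sqrtA T S : H →L[ℂ] H) (hA : A.IsPositive) (hA0 : A ≠ 0)
    (hsqrt : sqrtA.IsPositive) (hsq : sqrtA.comp sqrtA = A)
    (hT : MemBA A T) (hSmem : MemBA A S) (hS : IsDiamond sqrtA T S)
    (lam : ℂ) (hlamT : opANorm A T < ‖lam‖) (hlamS : opANorm A S < ‖lam‖) :
    lam ∈ rhoA A S :=
  stmt10_general A sqrtA T S hA0 hsqrt hsq hT hSmem hS lam hlamT hlamS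
end
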